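/- Let f : [0,1] → ℝ be continuous, and suppose its graph G = {(x, f(x)) : x ∈ [0,1]} is a self-similar set. Set λ = f(1) − f(0). Then there exists c ∈ (0, 1/2) such that for every closed interval [a,b] ⊆ [0,1] with a < b there exist s, t with a ≤ s < t ≤ b satisfying: (1) s ≤ (a+b)/2 ≤ t; (2) c·(b−a) ≤ t − s ≤ (b−a)/2; and (3) f(t) − f(s) = λ·(t − s). -/

import Mathlib

/-- The rotation of ℝ² by angle θ, given by the matrix ((cos θ, sin θ), (−sin θ, cos θ)). -/
noncomputable def rot (θ : ℝ) (v : ℝ × ℝ) : ℝ × ℝ :=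
  (v.1 * Real.cos θ + v.2 * Real.sin θ, -v.1 * Real.sin θ + v.2 * Real.cos θ)

/-- A (contracting) similitude of ℝ²: a map `S v = r • ρ_θ v + b` with `r ∈ (0,1)`. -/
def IsSimilitude (S : ℝ × ℝ → ℝ × ℝ) : Prop :=
  ∃ (r θ : ℝ) (b : ℝ × ℝ), r ∈ Set.Ioo (0 : ℝ) 1 ∧ ∀ v, S v = r • rot θ v + b

/-- A compact set `K ⊆ ℝ²` is self-similar if it is the union of its images under
finitely many (at least one) contracting similitudes. -/
def IsSelfSimilar (K : Set (ℝ × ℝ)) : Prop :=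
  IsCompact K ∧ ∃ (k : ℕ) (S : Fin k → ℝ × ℝ → ℝ × ℝ),
    0 < k ∧ (∀ i, IsSimilitude (S i)) ∧ K = ⋃ i, S i '' K

/-!
A similarity `T` of ratio `r > 0` mapping the graph `G` of `f` into itself has rotation angle
`θ ∈ πℤ`. Indeed the horizontal projection of `T` along `G` is continuous and injective, hence
monotone, so that of `T ∘ T` is increasing; thus the chord of `G` between the images of the
endpoints under `(T ∘ T)^n`, which is `r^(2n)` times the chord `(1, f 1 - f 0)` rotated by `2nθ`,
always points to the right, forcing `cos 2θ = 1`. Consequently `T(G)` is the part of `G` above an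
interval of length `r` on which `f` has mean slope `f 1 - f 0`.

Given `[a, b]`, follow the pieces `S_{i₁} ∘ ⋯ ∘ S_{iₙ}(G)` containing the point of `G` above the
midpoint until the ratio first drops to at most `(b - a) / 2`; it is then still at least
`r_min (b - a) / 2`, and the interval under the piece is `[s, t]`.
-/

open Real Set Function

section Trigonometry

lemma exists_nat_cos_add_nat_mul_nonpos (a : ℝ) {γ : ℝ} (hγ0 : 0 < γ) (hγπ : γ ≤ π) :
    ∃ n : ℕ, cos (a + n * γ) ≤ 0 := by
  set a' := toIcoMod two_pi_pos (-(π / 2)) a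
  have ha' : a' ∈ Ico (-(π / 2)) (-(π / 2) + 2 * π) := toIcoMod_mem_Ico _ _ _
  have hcos (x : ℝ) : cos (a + x) = cos (a' + x) := by
    have : a + x = a' + x + toIcoDiv two_pi_pos (-(π / 2)) a * (2 * π) := by
      linarith [self_sub_toIcoMod_eq_mul two_pi_pos (-(π / 2)) a]
    rw [this, cos_add_int_mul_two_pi]
  by_cases hle : π / 2 ≤ a'
  · refine ⟨0, ?_⟩
    rw [Nat.cast_zero, zero_mul, hcos, add_zero]
    exact cos_nonpos_of_pi_div_two_le_of_le hle (by linarith [ha'.2])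
  -- the first index at which `a' + n γ` passes `π / 2`; it cannot overshoot `3π/2` since `γ ≤ π`
  set n := ⌈(π / 2 - a') / γ⌉₊
  have hlow : π / 2 - a' ≤ n * γ := (div_le_iff₀ hγ0).mp (Nat.le_ceil _)
  have hup : n * γ < π / 2 - a' + γ :=
    calc n * γ < ((π / 2 - a') / γ + 1) * γ := by
          gcongr; exact Nat.ceil_lt_add_one (div_nonneg (by linarith) hγ0.le)
      _ = π / 2 - a' + γ := by field_simp
  exact ⟨n, by rw [hcos]; exact cos_nonpos_of_pi_div_two_le_of_le (by linarith) (by linarith)⟩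

lemma cos_eq_one_of_forall_cos_add_nat_mul_pos {a β : ℝ} (h : ∀ n : ℕ, 0 < cos (a + n * β)) :
    cos β = 1 := by
  set γ := toIcoMod two_pi_pos 0 β
  have hγ : γ ∈ Ico 0 (2 * π) := toIcoMod_mem_Ico' _ _
  set k := toIcoDiv two_pi_pos 0 β
  have hβ : β = γ + k * (2 * π) := by linarith [self_sub_toIcoMod_eq_mul two_pi_pos 0 β]
  have hpos (n : ℕ) : 0 < cos (a + n * γ) := by
    have : a + n * β = a + n * γ + ((n * k : ℤ) : ℝ) * (2 * π) := by rw [hβ]; push_cast; ring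
    rw [← cos_add_int_mul_two_pi _ (n * k), ← this]
    exact h n
  rcases hγ.1.eq_or_lt with hγ0 | hγ0
  · rw [hβ, ← hγ0, zero_add, cos_int_mul_two_pi]
  exfalso
  rcases le_or_gt γ π with hγπ | hγπ
  · obtain ⟨n, hn⟩ := exists_nat_cos_add_nat_mul_nonpos a hγ0 hγπ
    exact (hpos n).not_ge hn
  · -- walk backwards with the step `2π - γ ≤ π`
    obtain ⟨n, hn⟩ := exists_nat_cos_add_nat_mul_nonpos (-a) (γ := 2 * π - γ)
      (by linarith [hγ.2]) (by linarith)
    have : -a + n * (2 * π - γ) = -(a + n * γ) + n * (2 * π) := by ring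
    rw [this, (cos_periodic.nat_mul n) _, cos_neg] at hn
    exact (hpos n).not_ge hn

lemma cos_eq_one_of_forall_cos_add_mul_sin_pos {θ c : ℝ}
    (h : ∀ n : ℕ, 0 < cos (n * θ) + c * sin (n * θ)) : cos θ = 1 := by
  rw [← cos_neg]
  refine cos_eq_one_of_forall_cos_add_nat_mul_pos (a := arctan c) fun n => ?_
  have : cos (arctan c + n * -θ) = (cos (n * θ) + c * sin (n * θ)) / √(1 + c ^ 2) := by
    rw [show arctan c + n * -θ = arctan c - n * θ by ring, cos_sub, cos_arctan, sin_arctan]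
    ring
  rw [this]
  exact div_pos (h n) (sqrt_pos.mpr (by positivity))

end Trigonometry

section Rotation

@[simp]
lemma rot_zero (v : ℝ × ℝ) : rot 0 v = v := by
  simp [rot]

lemma rot_rot (θ ψ : ℝ) (v : ℝ × ℝ) : rot θ (rot ψ v) = rot (θ + ψ) v := by
  simp only [rot, cos_add, sin_add, Prod.mk.injEq]
  constructor <;> ring

lemma rot_add (θ : ℝ) (v w : ℝ × ℝ) : rot θ (v + w) = rot θ v + rot θ w := by
  simp only [rot, Prod.fst_add, Prod.snd_add, Prod.mk_add_mk, Prod.mk.injEq]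
  constructor <;> ring

lemma rot_smul (θ c : ℝ) (v : ℝ × ℝ) : rot θ (c • v) = c • rot θ v := by
  simp only [rot, Prod.smul_fst, Prod.smul_snd, smul_eq_mul, Prod.smul_mk, Prod.mk.injEq]
  constructor <;> ring

lemma rot_sub (θ : ℝ) (v w : ℝ × ℝ) : rot θ (v - w) = rot θ v - rot θ w := by
  simp only [rot, Prod.fst_sub, Prod.snd_sub, Prod.mk_sub_mk, Prod.mk.injEq]
  constructor <;> ring

lemma rot_injective (θ : ℝ) : Injective (rot θ) :=
  LeftInverse.injective (g := rot (-θ)) fun v => by rw [rot_rot, neg_add_cancel, rot_zero]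

lemma rot_eq_cos_smul_of_sin_eq_zero {θ : ℝ} (h : sin θ = 0) (v : ℝ × ℝ) :
    rot θ v = cos θ • v := by
  ext <;> simp [rot, h, mul_comm]

end Rotation

/-- Unlike `IsSimilitude`, the ratio is unconstrained, so that the identity and compositions
qualify. -/
def IsSimilarityWith (r : ℝ) (T : ℝ × ℝ → ℝ × ℝ) : Prop :=
  ∃ (θ : ℝ) (b : ℝ × ℝ), ∀ v, T v = r • rot θ v + b

namespace IsSimilarityWith

lemma of_isSimilitude {S : ℝ × ℝ → ℝ × ℝ} (hS : IsSimilitude S) :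
    ∃ r ∈ Ioo (0 : ℝ) 1, IsSimilarityWith r S :=
  let ⟨r, θ, b, hr, h⟩ := hS
  ⟨r, hr, θ, b, h⟩

lemma id : IsSimilarityWith 1 id :=
  ⟨0, 0, fun v => by simp⟩

lemma comp {r s : ℝ} {T S : ℝ × ℝ → ℝ × ℝ} (hT : IsSimilarityWith r T)
    (hS : IsSimilarityWith s S) : IsSimilarityWith (r * s) (T ∘ S) := by
  obtain ⟨θ, b, hT⟩ := hT
  obtain ⟨ψ, c, hS⟩ := hS
  refine ⟨θ + ψ, r • rot θ c + b, fun v => ?_⟩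
  simp only [comp_apply, hT, hS, rot_add, rot_smul, rot_rot, smul_add, smul_smul]
  abel

lemma continuous {r : ℝ} {T : ℝ × ℝ → ℝ × ℝ} (hT : IsSimilarityWith r T) : Continuous T := by
  obtain ⟨θ, b, hT⟩ := hT
  rw [funext hT]
  unfold rot
  fun_prop

lemma injective {r : ℝ} {T : ℝ × ℝ → ℝ × ℝ} (hT : IsSimilarityWith r T) (hr : r ≠ 0) :
    Injective T := by
  obtain ⟨θ, b, hT⟩ := hT
  intro v w h
  rw [hT, hT, add_left_inj] at h
  exact rot_injective θ (smul_right_injective _ hr h)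

end IsSimilarityWith

lemma iterate_sub_iterate_of_eq_smul_rot_add {r θ : ℝ} {b : ℝ × ℝ} {T : ℝ × ℝ → ℝ × ℝ}
    (hT : ∀ v, T v = r • rot θ v + b) (n : ℕ) (v w : ℝ × ℝ) :
    T^[n] v - T^[n] w = r ^ n • rot (n * θ) (v - w) := by
  induction n with
  | zero => simp
  | succ n ih =>
    rw [iterate_succ_apply', iterate_succ_apply', hT, hT, add_sub_add_right_eq_sub, ← smul_sub,
      ← rot_sub, ih, rot_smul, rot_rot, smul_smul, pow_succ']
    push_cast
    ring_nf

lemma StrictMonoOn.iterate {α : Type*} [Preorder α] {g : α → α} {s : Set α}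
    (hg : StrictMonoOn g s) (hs : MapsTo g s s) (n : ℕ) : StrictMonoOn g^[n] s := by
  induction n with
  | zero => exact strictMonoOn_id
  | succ n ih => exact ih.comp hg hs

section GraphPiece

variable {f : ℝ → ℝ} {T : ℝ × ℝ → ℝ × ℝ}

def graphAbscissa (T : ℝ × ℝ → ℝ × ℝ) (f : ℝ → ℝ) (x : ℝ) : ℝ :=
  (T (x, f x)).1

lemma graphAbscissa_mem_and_apply_eq (hTG : T '' graphOn f (Icc 0 1) ⊆ graphOn f (Icc 0 1))
    {x : ℝ} (hx : x ∈ Icc 0 1) :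
    graphAbscissa T f x ∈ Icc 0 1 ∧
      T (x, f x) = (graphAbscissa T f x, f (graphAbscissa T f x)) := by
  obtain ⟨hmem, heq⟩ := mem_graphOn.mp (hTG (mem_image_of_mem T ⟨x, hx, rfl⟩))
  exact ⟨hmem, Prod.ext rfl heq.symm⟩

lemma mapsTo_graphAbscissa (hTG : T '' graphOn f (Icc 0 1) ⊆ graphOn f (Icc 0 1)) :
    MapsTo (graphAbscissa T f) (Icc 0 1) (Icc 0 1) :=
  fun _ hx => (graphAbscissa_mem_and_apply_eq hTG hx).1

lemma iterate_apply_graph (hTG : T '' graphOn f (Icc 0 1) ⊆ graphOn f (Icc 0 1)) (n : ℕ)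
    {x : ℝ} (hx : x ∈ Icc 0 1) :
    T^[n] (x, f x) = ((graphAbscissa T f)^[n] x, f ((graphAbscissa T f)^[n] x)) := by
  induction n with
  | zero => rfl
  | succ n ih =>
    rw [iterate_succ_apply', iterate_succ_apply', ih,
      (graphAbscissa_mem_and_apply_eq hTG ((mapsTo_graphAbscissa hTG).iterate n hx)).2]

lemma strictMonoOn_graphAbscissa_comp_self (hf : ContinuousOn f (Icc 0 1)) (hT : Continuous T)
    (hT' : Injective T) (hTG : T '' graphOn f (Icc 0 1) ⊆ graphOn f (Icc 0 1)) :
    StrictMonoOn (graphAbscissa T f ∘ graphAbscissa T f) (Icc 0 1) := by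
  have hcont : ContinuousOn (graphAbscissa T f) (Icc 0 1) :=
    continuous_fst.comp_continuousOn (hT.comp_continuousOn (continuousOn_id.prodMk hf))
  have hinj : InjOn (graphAbscissa T f) (Icc 0 1) := fun x hx y hy hxy => by
    have := (graphAbscissa_mem_and_apply_eq hTG hx).2
    rw [hxy, ← (graphAbscissa_mem_and_apply_eq hTG hy).2] at this
    exact congrArg Prod.fst (hT' this)
  have hmaps := mapsTo_graphAbscissa hTG
  rcases hcont.strictMonoOn_of_injOn_Icc' zero_le_one hinj with hmono | hanti
  · exact hmono.comp hmono hmaps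
  · exact hanti.comp hanti hmaps

lemma sin_eq_zero_of_image_graphOn_subset {r θ : ℝ} {b : ℝ × ℝ} (hf : ContinuousOn f (Icc 0 1))
    (hr : 0 < r) (hT : ∀ v, T v = r • rot θ v + b)
    (hTG : T '' graphOn f (Icc 0 1) ⊆ graphOn f (Icc 0 1)) : sin θ = 0 := by
  have hsim : IsSimilarityWith r T := ⟨θ, b, hT⟩
  set φ := graphAbscissa T f
  have h0 : (0 : ℝ) ∈ Icc 0 1 := left_mem_Icc.mpr zero_le_one
  have h1 : (1 : ℝ) ∈ Icc 0 1 := right_mem_Icc.mpr zero_le_one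
  have hchord (n : ℕ) : φ^[2 * n] 1 - φ^[2 * n] 0 =
      r ^ (2 * n) * (cos (n * (2 * θ)) + (f 1 - f 0) * sin (n * (2 * θ))) := by
    have := congrArg Prod.fst (iterate_sub_iterate_of_eq_smul_rot_add hT (2 * n) (1, f 1) (0, f 0))
    rw [iterate_apply_graph hTG _ h1, iterate_apply_graph hTG _ h0] at this
    simp only [Prod.fst_sub, Prod.snd_sub, Prod.smul_fst, smul_eq_mul, rot] at this
    rw [this]
    push_cast
    ring_nf
  have hincr (n : ℕ) : φ^[2 * n] 0 < φ^[2 * n] 1 := by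
    rw [iterate_mul]
    have hmaps := mapsTo_graphAbscissa hTG
    exact ((strictMonoOn_graphAbscissa_comp_self hf hsim.continuous (hsim.injective hr.ne')
      hTG).iterate (hmaps.comp hmaps) n) h0 h1 zero_lt_one
  have hcos : cos (2 * θ) = 1 := cos_eq_one_of_forall_cos_add_mul_sin_pos fun n =>
    pos_of_mul_pos_right ((hchord n).symm.trans_gt (sub_pos.mpr (hincr n))) (by positivity)
  nlinarith [cos_two_mul θ, sin_sq_add_cos_sq θ, sq_nonneg (sin θ)]

lemma exists_Icc_of_apply_affine_eq {r c d e : ℝ} (hr : 0 ≤ r) (hc : c = r ∨ c = -r)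
    (h : ∀ x ∈ Icc (0 : ℝ) 1, f (c * x + d) = c * f x + e) :
    ∃ u v, v - u = r ∧ f v - f u = (f 1 - f 0) * r ∧ ∀ x ∈ Icc (0 : ℝ) 1, c * x + d ∈ Icc u v := by
  have hf0 := h 0 (left_mem_Icc.mpr zero_le_one)
  have hf1 := h 1 (right_mem_Icc.mpr zero_le_one)
  simp only [mul_zero, zero_add, mul_one] at hf0 hf1
  rcases hc with rfl | rfl
  · refine ⟨d, c + d, by ring, by rw [hf0, hf1]; ring, fun x hx => ?_⟩
    constructor <;> nlinarith [hx.1, hx.2]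
  · refine ⟨-r + d, d, by ring, by rw [hf0, hf1]; ring, fun x hx => ?_⟩
    constructor <;> nlinarith [hx.1, hx.2]

lemma exists_Icc_of_image_graphOn_subset {r : ℝ} (hf : ContinuousOn f (Icc 0 1)) (hr : 0 < r)
    (hT : IsSimilarityWith r T) (hTG : T '' graphOn f (Icc 0 1) ⊆ graphOn f (Icc 0 1)) :
    ∃ u v, v - u = r ∧ f v - f u = (f 1 - f 0) * r ∧
      ∀ q ∈ T '' graphOn f (Icc 0 1), q.1 ∈ Icc u v := by
  obtain ⟨θ, b, hT⟩ := hT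
  have hsin := sin_eq_zero_of_image_graphOn_subset hf hr hT hTG
  have hTx (x : ℝ) : T (x, f x) = (r * cos θ * x + b.1, r * cos θ * f x + b.2) := by
    rw [hT, rot_eq_cos_smul_of_sin_eq_zero hsin]
    ext <;> simp only [Prod.smul_mk, smul_eq_mul, Prod.fst_add, Prod.snd_add] <;> ring
  obtain ⟨u, v, hvu, hfvu, hmem⟩ :=
    exists_Icc_of_apply_affine_eq (f := f) (c := r * cos θ) (d := b.1) (e := b.2) hr.le
      (by rcases sin_eq_zero_iff_cos_eq.mp hsin with h | h <;> simp [h])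
      (fun x hx => by simpa [hTx] using (mem_graphOn.mp (hTG ⟨_, ⟨x, hx, rfl⟩, rfl⟩)).2)
  refine ⟨u, v, hvu, hfvu, ?_⟩
  rintro _ ⟨_, ⟨x, hx, rfl⟩, rfl⟩
  simpa [hTx] using hmem x hx

end GraphPiece

section Descent

variable {ι : Type*} {K : Set (ℝ × ℝ)} {S : ι → ℝ × ℝ → ℝ × ℝ}

lemma exists_image_comp_subset_mem (hK : K = ⋃ i, S i '' K) {T : ℝ × ℝ → ℝ × ℝ}
    (hTK : T '' K ⊆ K) {q : ℝ × ℝ} (hq : q ∈ T '' K) :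
    ∃ i, (T ∘ S i) '' K ⊆ K ∧ q ∈ (T ∘ S i) '' K := by
  rw [hK, image_iUnion, mem_iUnion] at hq
  obtain ⟨i, hi⟩ := hq
  refine ⟨i, ?_, by rwa [image_comp]⟩
  rw [image_comp]
  exact (image_mono ((subset_iUnion (fun j => S j '' K) i).trans hK.symm.subset)).trans hTK

lemma exists_similarity_image_subset_mem_ratio_mem_Icc {r : ι → ℝ} {rmin rmax ε : ℝ}
    (hS : ∀ i, IsSimilarityWith (r i) (S i)) (hr : ∀ i, r i ∈ Icc rmin rmax) (hrmin : 0 ≤ rmin)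
    (hrmax : rmax < 1) (hK : K = ⋃ i, S i '' K) {q : ℝ × ℝ} (hq : q ∈ K) (hε : 0 < ε)
    (hε₁ : ε ≤ 1) :
    ∃ T ρ, IsSimilarityWith ρ T ∧ T '' K ⊆ K ∧ q ∈ T '' K ∧ rmin * ε ≤ ρ ∧ ρ ≤ ε := by
  -- `n` is a budget of further subdivisions, each shrinking the ratio by a factor `≤ rmax`
  suffices H : ∀ n : ℕ, ∀ T ρ, IsSimilarityWith ρ T → T '' K ⊆ K → q ∈ T '' K →
      rmin * ε ≤ ρ → ρ * rmax ^ n < ε →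
      ∃ T ρ, IsSimilarityWith ρ T ∧ T '' K ⊆ K ∧ q ∈ T '' K ∧ rmin * ε ≤ ρ ∧ ρ ≤ ε by
    obtain ⟨i, -⟩ := mem_iUnion.mp (hK ▸ hq)
    have hrmin₁ : rmin ≤ 1 := by linarith [(hr i).1, (hr i).2]
    obtain ⟨n, hn⟩ := exists_pow_lt_of_lt_one hε hrmax
    exact H n id 1 .id (by simp) (by simpa) (by nlinarith) (by simpa)
  intro n
  induction n with
  | zero =>
    intro T ρ hT hTK hqT hlow hup
    exact ⟨T, ρ, hT, hTK, hqT, hlow, by simpa using hup.le⟩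
  | succ n ih =>
    intro T ρ hT hTK hqT hlow hup
    by_cases hρ : ρ ≤ ε
    · exact ⟨T, ρ, hT, hTK, hqT, hlow, hρ⟩
    obtain ⟨i, hiK, hqi⟩ := exists_image_comp_subset_mem hK hTK hqT
    obtain ⟨hri₀, hri₁⟩ := hr i
    refine ih (T ∘ S i) (ρ * r i) (hT.comp (hS i)) hiK hqi (by nlinarith) ?_
    calc ρ * r i * rmax ^ n ≤ ρ * rmax * rmax ^ n :=
          mul_le_mul_of_nonneg_right (mul_le_mul_of_nonneg_left hri₁ (by nlinarith))
            (pow_nonneg (by linarith) _)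
      _ = ρ * rmax ^ (n + 1) := by ring
      _ < ε := hup

end Descent

theorem selfSimilar_graph_subinterval_with_mean_slope (f : ℝ → ℝ)
    (hf : ContinuousOn f (Set.Icc (0 : ℝ) 1))
    (G : Set (ℝ × ℝ)) (hG : G = (fun x => (x, f x)) '' Set.Icc (0 : ℝ) 1)
    (hss : IsSelfSimilar G)
    (lam : ℝ) (hlam : lam = f 1 - f 0) :
    ∃ c ∈ Set.Ioo (0 : ℝ) (1 / 2), ∀ a b : ℝ, 0 ≤ a → a < b → b ≤ 1 →
      ∃ s t : ℝ, a ≤ s ∧ s < t ∧ t ≤ b ∧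
        s ≤ (a + b) / 2 ∧ (a + b) / 2 ≤ t ∧
        c * (b - a) ≤ t - s ∧ t - s ≤ (b - a) / 2 ∧
        f t - f s = lam * (t - s) := by
  subst hG hlam
  obtain ⟨-, k, S, hk, hS, hGS⟩ := hss
  choose r hr hSr using fun i => IsSimilarityWith.of_isSimilitude (hS i)
  have : Nonempty (Fin k) := Fin.pos_iff_nonempty.mp hk
  obtain ⟨imin, himin⟩ := Finite.exists_min r
  obtain ⟨imax, himax⟩ := Finite.exists_max r
  refine ⟨r imin / 2, ⟨by linarith [(hr imin).1], by linarith [(hr imin).2]⟩,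
    fun a b ha hab hb => ?_⟩
  have hp : ((a + b) / 2, f ((a + b) / 2)) ∈ graphOn f (Icc 0 1) :=
    ⟨_, ⟨by linarith, by linarith⟩, rfl⟩
  obtain ⟨T, ρ, hT, hTG, hpT, hρ₀, hρ₁⟩ :=
    exists_similarity_image_subset_mem_ratio_mem_Icc (ε := (b - a) / 2) hSr
      (fun i => ⟨himin i, himax i⟩) (hr imin).1.le (hr imax).2 hGS hp (by linarith) (by linarith)
  have hρ : 0 < ρ := (mul_pos (hr imin).1 (by linarith)).trans_le hρ₀
  obtain ⟨u, v, hvu, hfvu, hmem⟩ := exists_Icc_of_image_graphOn_subset hf hρ hT hTG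
  obtain ⟨hup, hpv⟩ : u ≤ (a + b) / 2 ∧ (a + b) / 2 ≤ v := hmem _ hpT
  refine ⟨u, v, by linarith, by linarith, by linarith, hup, hpv, by linarith, by linarith, ?_⟩
  rw [hfvu, hvu]
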